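/- arXiv:2104.13949 — 3 statements merged into one kernel-verified Lean document; each statement's English description precedes it below -/
import Mathlib

section
/- Let k be a positive integer, let p ∈ Δ and let u ∈ ℝ^k. Then p maximizes the linear functional q ↦ ⟨u, q⟩ over Δ (i.e., ⟨u, q⟩ ≤ ⟨u, p⟩ for all q ∈ Δ) if and only if p is the nearest point of Δ to p + u, i.e., p = π_Δ(p + u). (This is the pointwise form of the paper's Lemma 2: a strategy p is a symmetric Nash equilibrium for a utility map u : Δ → ℝ^k if and only if p = π_Δ(p + u(p)).) -/
open scoped RealInnerProductSpace

noncomputable section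

/-- The standard simplex `Δ` in `ℝ^k`. -/
def stdSimplexE (k : ℕ) : Set (EuclideanSpace ℝ (Fin k)) :=
  {x | (∀ i, 0 ≤ x i) ∧ ∑ i, x i = 1}

/-- `p` is the nearest point of `S` to `x`, i.e. `p = π_S(x)` (the nearest point is
unique when `S` is nonempty, compact and convex). -/
def IsNearestPt {k : ℕ} (S : Set (EuclideanSpace ℝ (Fin k)))
    (x p : EuclideanSpace ℝ (Fin k)) : Prop :=
  p ∈ S ∧ ∀ q ∈ S, ‖x - p‖ ≤ ‖x - q‖

lemma stdSimplexE_convex (k : ℕ) : Convex ℝ (stdSimplexE k) := by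
  intro x hx y hy a b ha hb hab
  refine ⟨fun i => ?_, ?_⟩
  · have : (a • x + b • y) i = a * x i + b * y i := rfl
    rw [this]
    exact add_nonneg (mul_nonneg ha (hx.1 i)) (mul_nonneg hb (hy.1 i))
  · have : ∀ i, (a • x + b • y) i = a * x i + b * y i := fun i => rfl
    simp only [this, Finset.sum_add_distrib, ← Finset.mul_sum, hx.2, hy.2]
    linarith

/-- for `p ∈ Δ` and `u ∈ ℝ^k`, `p` maximizes `q ↦ ⟨u, q⟩` over `Δ`
iff `p = π_Δ(p + u)`. -/
theorem stmt0 (k : ℕ) (hk : 0 < k) (p : EuclideanSpace ℝ (Fin k))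
    (hp : p ∈ stdSimplexE k) (u : EuclideanSpace ℝ (Fin k)) :
    (∀ q ∈ stdSimplexE k, ⟪u, q⟫ ≤ ⟪u, p⟫) ↔
      IsNearestPt (stdSimplexE k) (p + u) p := by
  have hconv := stdSimplexE_convex k
  have key := norm_eq_iInf_iff_real_inner_le_zero (u := p + u) hconv hp
  have hsimp : p + u - p = u := by abel
  rw [hsimp] at key
  constructor
  · intro hmax
    refine ⟨hp, fun q hq => ?_⟩
    have h1 : ‖u‖ = ⨅ w : stdSimplexE k, ‖p + u - w‖ := by
      rw [key]
      intro w hw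
      rw [inner_sub_right]
      linarith [hmax w hw]
    rw [hsimp, h1]
    exact ciInf_le ⟨0, fun _ ⟨_, h⟩ => h ▸ norm_nonneg _⟩ (⟨q, hq⟩ : stdSimplexE k)
  · intro ⟨_, hnear⟩ q hq
    haveI : Nonempty ↑(stdSimplexE k) := ⟨⟨p, hp⟩⟩
    have h1 : ‖u‖ = ⨅ w : stdSimplexE k, ‖p + u - w‖ := by
      have hn : ‖u‖ = ‖p + u - p‖ := by rw [hsimp]
      rw [hn]
      apply le_antisymm
      · exact le_ciInf fun ⟨w, hw⟩ => hnear w hw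
      · exact ciInf_le ⟨0, fun _ ⟨_, h⟩ => h ▸ norm_nonneg _⟩ (⟨p, hp⟩ : stdSimplexE k)
    have := key.mp h1 q hq
    rw [inner_sub_right] at this
    linarith
end
end

section
/- Let k be a positive integer, K ≥ 0, and let u : Δ → ℝ^k have all coordinates nonnegative and satisfy, for all p, q ∈ Δ: ‖u(p) − u(q)‖ ≤ K·‖p − q‖ and |⟨u(p), p⟩ − ⟨u(q), q⟩| ≤ K·‖p − q‖. Let p^e ∈ Δ be a symmetric Nash equilibrium, i.e., ⟨u(p^e), q⟩ ≤ ⟨u(p^e), p^e⟩ for all q ∈ Δ. Then for all p, q ∈ Δ: ⟨u(p), q⟩ ≤ ⟨u(p), p⟩ + 2K·‖p − p^e‖. In particular, every p ∈ Δ is a (2K·‖p − p^e‖)-approximate Nash equilibrium. (The chain of inequalities derived in the paper's proof of Proposition 1.) -/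
open scoped RealInnerProductSpace

noncomputable section

theorem EuclideanSpace.norm_le_sum_abs {ι : Type*} [Fintype ι] (x : EuclideanSpace ℝ ι) :
    ‖x‖ ≤ ∑ i, |x i| := by
  conv_lhs => rw [← (EuclideanSpace.basisFun ι ℝ).sum_repr x]
  refine (norm_sum_le _ _).trans_eq ?_
  simp [norm_smul]

theorem norm_le_one_of_mem_stdSimplexE {k : ℕ} {x : EuclideanSpace ℝ (Fin k)}
    (hx : x ∈ stdSimplexE k) : ‖x‖ ≤ 1 := by
  obtain ⟨hnonneg, hsum⟩ := hx
  calc ‖x‖ ≤ ∑ i, |x i| := EuclideanSpace.norm_le_sum_abs x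
    _ = 1 := by simp only [abs_of_nonneg (hnonneg _), hsum]

theorem real_inner_le_real_inner_add_norm_sub {F : Type*} [NormedAddCommGroup F]
    [InnerProductSpace ℝ F] (a b : F) {q : F} (hq : ‖q‖ ≤ 1) : ⟪a, q⟫ ≤ ⟪b, q⟫ + ‖a - b‖ := by
  have h : ⟪a - b, q⟫ ≤ ‖a - b‖ :=
    (real_inner_le_norm _ _).trans (mul_le_of_le_one_right (norm_nonneg _) hq)
  rw [inner_sub_left] at h
  linarith

theorem stmt11_general (k : ℕ) (K : ℝ)
    (u : EuclideanSpace ℝ (Fin k) → EuclideanSpace ℝ (Fin k))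
    (hLip : ∀ p ∈ stdSimplexE k, ∀ q ∈ stdSimplexE k, ‖u p - u q‖ ≤ K * ‖p - q‖)
    (hLip' : ∀ p ∈ stdSimplexE k, ∀ q ∈ stdSimplexE k,
      |⟪u p, p⟫ - ⟪u q, q⟫| ≤ K * ‖p - q‖)
    (pe : EuclideanSpace ℝ (Fin k)) (hpe : pe ∈ stdSimplexE k)
    (heq : ∀ q ∈ stdSimplexE k, ⟪u pe, q⟫ ≤ ⟪u pe, pe⟫) :
    ∀ p ∈ stdSimplexE k, ∀ q ∈ stdSimplexE k,
      ⟪u p, q⟫ ≤ ⟪u p, p⟫ + 2 * K * ‖p - pe‖ := by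
  intro p hp q hq
  have hpayoff : ⟪u pe, pe⟫ ≤ ⟪u p, p⟫ + K * ‖p - pe‖ := by
    linarith [(abs_le.mp (hLip' p hp pe hpe)).1]
  calc ⟪u p, q⟫ ≤ ⟪u pe, q⟫ + ‖u p - u pe‖ :=
        real_inner_le_real_inner_add_norm_sub _ _ (norm_le_one_of_mem_stdSimplexE hq)
    _ ≤ ⟪u pe, pe⟫ + K * ‖p - pe‖ := add_le_add (heq q hq) (hLip p hp pe hpe)
    _ ≤ ⟪u p, p⟫ + 2 * K * ‖p - pe‖ := by linarith

/-- let `u : Δ → ℝ^k` have nonnegative coordinates, with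
`‖u(p) − u(q)‖ ≤ K‖p − q‖` and `|⟨u(p), p⟩ − ⟨u(q), q⟩| ≤ K‖p − q‖` on `Δ`, and let
`p^e ∈ Δ` be a symmetric Nash equilibrium. Then for all `p, q ∈ Δ`,
`⟨u(p), q⟩ ≤ ⟨u(p), p⟩ + 2K‖p − p^e‖`; i.e. every `p ∈ Δ` is a
`(2K‖p − p^e‖)`-approximate Nash equilibrium. -/
theorem stmt11 (k : ℕ) (hk : 0 < k) (K : ℝ) (hK : 0 ≤ K)
    (u : EuclideanSpace ℝ (Fin k) → EuclideanSpace ℝ (Fin k))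
    (hnn : ∀ p ∈ stdSimplexE k, ∀ i, 0 ≤ u p i)
    (hLip : ∀ p ∈ stdSimplexE k, ∀ q ∈ stdSimplexE k, ‖u p - u q‖ ≤ K * ‖p - q‖)
    (hLip' : ∀ p ∈ stdSimplexE k, ∀ q ∈ stdSimplexE k,
      |⟪u p, p⟫ - ⟪u q, q⟫| ≤ K * ‖p - q‖)
    (pe : EuclideanSpace ℝ (Fin k)) (hpe : pe ∈ stdSimplexE k)
    (heq : ∀ q ∈ stdSimplexE k, ⟪u pe, q⟫ ≤ ⟪u pe, pe⟫) :
    ∀ p ∈ stdSimplexE k, ∀ q ∈ stdSimplexE k,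
      ⟪u p, q⟫ ≤ ⟪u p, p⟫ + 2 * K * ‖p - pe‖ :=
  stmt11_general k K u hLip hLip' pe hpe heq
end
end

section
/- Let R, C > 0 and let w₁, w₂ : [0,1] → ℝ be continuous, strictly increasing functions with w₂(0) ≤ w₁(0). For p = (p₁, p₂, p₃) in the standard simplex Δ₂ ⊂ ℝ³ define u₁(p) = R − C·w₁(p₁), u₂(p) = R − C·w₂(p₂), and u₃(p) = 0. Then there exists exactly one p ∈ Δ₂ such that for every i ∈ {1,2,3}, p_i > 0 implies u_i(p) = max_{j∈{1,2,3}} u_j(p). (The paper's Lemma 1 for two unobservable GI/G/1 queues in parallel, stated with the properties of the stationary mean waiting-time functions that the proof uses: w_m is the continuous, strictly increasing mean stationary waiting time—service inclusive—in queue m as a function of the joining probability p_m, with w_m(0) = 1/μ_m the mean service time, and the ordering 1/μ₁ ≥ 1/μ₂.) -/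
/-!
The payoff of action `i` is `f i (p i)`, with every `f i` continuous and antitone on `[0, 1]`, and
strictly antitone except for the constant payoff of balking. The game has the potential
`∑ i, ∫₀^{p i} f i`, which attains its maximum on the compact simplex; at a maximum no action in
the support can be beaten, since moving a small mass `ε` from a worse action `i` to a better
action `j` raises the potential by about `ε (f j - f i) > 0`. For uniqueness, the best-response
inequalities of two equilibria `p`, `q` give `0 ≤ ∑ i, (p i - q i) (f i (p i) - f i (q i))`, while
antitonicity makes every term `≤ 0`, hence zero; strictness then forces `p i = q i` off the
balking coordinate, and `∑ p = ∑ q = 1` does the rest.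
-/

open Set Finset MeasureTheory

def IsBestResponse {ι : Type*} (p u : ι → ℝ) : Prop :=
  ∀ i, 0 < p i → ∀ j, u j ≤ u i

namespace IsBestResponse

variable {ι : Type*} [Fintype ι] {p q u v : ι → ℝ}

theorem le_sum_mul (hp : p ∈ stdSimplex ℝ ι) (h : IsBestResponse p u) (j : ι) :
    u j ≤ ∑ i, p i * u i :=
  calc u j = ∑ i, p i * u j := by rw [← sum_mul, hp.2, one_mul]
    _ ≤ ∑ i, p i * u i := sum_le_sum fun i _ => by
      rcases (hp.1 i).eq_or_lt with hpi | hpi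
      · simp [← hpi]
      · exact mul_le_mul_of_nonneg_left (h i hpi j) hpi.le

theorem sum_mul_le (hp : p ∈ stdSimplex ℝ ι) (h : IsBestResponse p u)
    (hq : q ∈ stdSimplex ℝ ι) : ∑ j, q j * u j ≤ ∑ i, p i * u i :=
  calc ∑ j, q j * u j ≤ ∑ j, q j * ∑ i, p i * u i :=
        sum_le_sum fun j _ => mul_le_mul_of_nonneg_left (h.le_sum_mul hp j) (hq.1 j)
    _ = ∑ i, p i * u i := by rw [← sum_mul, hq.2, one_mul]

theorem sum_sub_mul_sub_nonneg (hp : p ∈ stdSimplex ℝ ι) (hu : IsBestResponse p u)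
    (hq : q ∈ stdSimplex ℝ ι) (hv : IsBestResponse q v) :
    0 ≤ ∑ i, (p i - q i) * (u i - v i) := by
  have key : ∑ i, (p i - q i) * (u i - v i) =
      (∑ i, p i * u i - ∑ i, q i * u i) + (∑ i, q i * v i - ∑ i, p i * v i) := by
    simp only [← sum_sub_distrib, ← sum_add_distrib]
    exact sum_congr rfl fun i _ => by ring
  linarith [hu.sum_mul_le hp hq, hv.sum_mul_le hq hp]

end IsBestResponse

theorem AntitoneOn.sub_mul_sub_nonpos {f : ℝ → ℝ} {s : Set ℝ} (hf : AntitoneOn f s)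
    {x y : ℝ} (hx : x ∈ s) (hy : y ∈ s) : (x - y) * (f x - f y) ≤ 0 := by
  rcases le_total x y with hxy | hxy
  · exact mul_nonpos_of_nonpos_of_nonneg (sub_nonpos.2 hxy) (sub_nonneg.2 (hf hx hy hxy))
  · exact mul_nonpos_of_nonneg_of_nonpos (sub_nonneg.2 hxy) (sub_nonpos.2 (hf hy hx hxy))

theorem StrictAntiOn.sub_mul_sub_neg {f : ℝ → ℝ} {s : Set ℝ} (hf : StrictAntiOn f s)
    {x y : ℝ} (hx : x ∈ s) (hy : y ∈ s) (hxy : x ≠ y) : (x - y) * (f x - f y) < 0 := by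
  rcases hxy.lt_or_gt with hxy | hxy
  · exact mul_neg_of_neg_of_pos (sub_neg.2 hxy) (sub_pos.2 (hf hx hy hxy))
  · exact mul_neg_of_pos_of_neg (sub_pos.2 hxy) (sub_neg.2 (hf hy hx hxy))

theorem eq_of_mem_stdSimplex_of_forall_ne_eq {ι : Type*} [Fintype ι] [DecidableEq ι]
    {p q : ι → ℝ} (hp : p ∈ stdSimplex ℝ ι) (hq : q ∈ stdSimplex ℝ ι) (k : ι)
    (h : ∀ i ≠ k, p i = q i) : p = q := by
  have hk : p k = q k := by
    have hsum : ∑ i ∈ univ.erase k, p i = ∑ i ∈ univ.erase k, q i :=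
      sum_congr rfl fun i hi => h i (ne_of_mem_erase hi)
    have := add_sum_erase univ p (mem_univ k)
    have := add_sum_erase univ q (mem_univ k)
    linarith [hp.2, hq.2]
  funext i
  by_cases hik : i = k
  · rw [hik, hk]
  · exact h i hik

theorem eq_of_isBestResponse {ι : Type*} [Fintype ι] [DecidableEq ι] {f : ι → ℝ → ℝ}
    (hf : ∀ i, AntitoneOn (f i) (Icc 0 1)) (k : ι)
    (hfk : ∀ i ≠ k, StrictAntiOn (f i) (Icc 0 1)) {p q : ι → ℝ}
    (hp : p ∈ stdSimplex ℝ ι) (hpf : IsBestResponse p fun i => f i (p i))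
    (hq : q ∈ stdSimplex ℝ ι) (hqf : IsBestResponse q fun i => f i (q i)) : p = q := by
  have hterm : ∀ i ∈ (univ : Finset ι), (p i - q i) * (f i (p i) - f i (q i)) ≤ 0 := fun i _ =>
    (hf i).sub_mul_sub_nonpos (mem_Icc_of_mem_stdSimplex hp i) (mem_Icc_of_mem_stdSimplex hq i)
  have hzero := (sum_eq_zero_iff_of_nonpos hterm).1
    (le_antisymm (sum_nonpos hterm) (hpf.sum_sub_mul_sub_nonneg hp hq hqf))
  refine eq_of_mem_stdSimplex_of_forall_ne_eq hp hq k fun i hik => ?_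
  by_contra hne
  exact ((hfk i hik).sub_mul_sub_neg (mem_Icc_of_mem_stdSimplex hp i)
    (mem_Icc_of_mem_stdSimplex hq i) hne).ne (hzero i (mem_univ i))

theorem AntitoneOn.mul_le_intervalIntegral {g : ℝ → ℝ} {a b : ℝ} (hg : AntitoneOn g (Icc a b))
    (hab : a ≤ b) : (b - a) * g b ≤ ∫ x in a..b, g x := by
  have hint : IntervalIntegrable g volume a b :=
    AntitoneOn.intervalIntegrable (by rwa [Set.uIcc_of_le hab])
  simpa using intervalIntegral.integral_mono_on hab intervalIntegrable_const hint
    fun x hx => hg hx (right_mem_Icc.2 hab) hx.2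

theorem AntitoneOn.intervalIntegral_le_mul {g : ℝ → ℝ} {a b : ℝ} (hg : AntitoneOn g (Icc a b))
    (hab : a ≤ b) : ∫ x in a..b, g x ≤ (b - a) * g a := by
  have hint : IntervalIntegrable g volume a b :=
    AntitoneOn.intervalIntegrable (by rwa [Set.uIcc_of_le hab])
  simpa using intervalIntegral.integral_mono_on hab hint intervalIntegrable_const
    fun x hx => hg (left_mem_Icc.2 hab) hx hx.1

section Transfer

variable {ι : Type*} [Fintype ι] [DecidableEq ι]

def transfer (p : ι → ℝ) (i j : ι) (ε : ℝ) : ι → ℝ :=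
  Function.update (Function.update p i (p i - ε)) j (p j + ε)

variable {p : ι → ℝ} {i j : ι} {ε : ℝ}

theorem sum_transfer_sub (g : ι → ℝ → ℝ) (hij : i ≠ j) :
    ∑ k, g k (transfer p i j ε k) - ∑ k, g k (p k) =
      (g i (p i - ε) - g i (p i)) + (g j (p j + ε) - g j (p j)) := by
  rw [← sum_sub_distrib, Fintype.sum_eq_add i j hij fun k hk => ?_]
  · simp [transfer, hij]
  · simp [transfer, hk.1, hk.2]

theorem transfer_mem_stdSimplex (hp : p ∈ stdSimplex ℝ ι) (hij : i ≠ j) (hε : 0 ≤ ε)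
    (hεi : ε ≤ p i) : transfer p i j ε ∈ stdSimplex ℝ ι := by
  refine ⟨fun k => ?_, ?_⟩
  · rcases eq_or_ne k j with rfl | hkj
    · simpa [transfer] using add_nonneg (hp.1 k) hε
    rcases eq_or_ne k i with rfl | hki
    · simpa [transfer, hkj] using hεi
    · simpa [transfer, hkj, hki] using hp.1 k
  · have := sum_transfer_sub (p := p) (ε := ε) (fun _ x => x) hij
    linarith [hp.2]

end Transfer

section Potential

variable {ι : Type*} [Fintype ι] {f : ι → ℝ → ℝ}

noncomputable def beckmannPotential (f : ι → ℝ → ℝ) (p : ι → ℝ) : ℝ :=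
  ∑ i, ∫ t in (0)..(p i), f i t

theorem continuousOn_beckmannPotential (hf : ∀ i, ContinuousOn (f i) (Icc 0 1)) :
    ContinuousOn (beckmannPotential f) (stdSimplex ℝ ι) := by
  refine continuousOn_finsetSum _ fun i _ => ?_
  have hprim : ContinuousOn (fun x => ∫ t in (0)..x, f i t) (Icc 0 1) := by
    rw [← Set.uIcc_of_le zero_le_one]
    exact intervalIntegral.continuousOn_primitive_interval
      (by rw [Set.uIcc_of_le zero_le_one]; exact (hf i).integrableOn_Icc (μ := volume))
  exact hprim.comp (continuous_apply i).continuousOn fun p hp => mem_Icc_of_mem_stdSimplex hp i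

variable [DecidableEq ι]

theorem mul_sub_le_beckmannPotential_transfer_sub (hf : ∀ i, AntitoneOn (f i) (Icc 0 1))
    {p : ι → ℝ} (hp : p ∈ stdSimplex ℝ ι) {i j : ι} (hij : i ≠ j) {ε : ℝ} (hε : 0 ≤ ε)
    (hεi : ε ≤ p i) :
    ε * (f j (p j + ε) - f i (p i - ε)) ≤
      beckmannPotential f (transfer p i j ε) - beckmannPotential f p := by
  have hq := transfer_mem_stdSimplex hp hij hε hεi
  have hpi := mem_Icc_of_mem_stdSimplex hp i
  have hqi : p i - ε ∈ Icc (0 : ℝ) 1 := by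
    simpa [transfer, hij] using mem_Icc_of_mem_stdSimplex hq i
  have hqj : p j + ε ∈ Icc (0 : ℝ) 1 := by
    simpa [transfer] using mem_Icc_of_mem_stdSimplex hq j
  have hint : ∀ k, ∀ x ∈ Icc (0 : ℝ) 1, IntervalIntegrable (f k) volume 0 x :=
    fun k x hx => AntitoneOn.intervalIntegrable <| (hf k).mono <| by
      rw [Set.uIcc_of_le hx.1]; exact Icc_subset_Icc_right hx.2
  have hi : (∫ t in (0)..(p i), f i t) - ∫ t in (0)..(p i - ε), f i t ≤ ε * f i (p i - ε) := by
    rw [intervalIntegral.integral_interval_sub_left (hint i _ hpi) (hint i _ hqi)]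
    simpa using ((hf i).mono (Icc_subset_Icc hqi.1 hpi.2)).intervalIntegral_le_mul (by linarith)
  have hj : ε * f j (p j + ε) ≤ (∫ t in (0)..(p j + ε), f j t) - ∫ t in (0)..(p j), f j t := by
    rw [intervalIntegral.integral_interval_sub_left (hint j _ hqj)
      (hint j _ (mem_Icc_of_mem_stdSimplex hp j))]
    simpa using ((hf j).mono (Icc_subset_Icc (hp.1 j) hqj.2)).mul_le_intervalIntegral
      (by linarith)
  have := sum_transfer_sub (p := p) (ε := ε) (fun k x => ∫ t in (0)..x, f k t) hij
  simp only [beckmannPotential]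
  linarith

theorem IsMaxOn.isBestResponse (hfc : ∀ i, ContinuousOn (f i) (Icc 0 1))
    (hf : ∀ i, AntitoneOn (f i) (Icc 0 1)) {p : ι → ℝ} (hp : p ∈ stdSimplex ℝ ι)
    (hmax : IsMaxOn (beckmannPotential f) (stdSimplex ℝ ι) p) :
    IsBestResponse p fun i => f i (p i) := by
  intro i hi j
  by_contra! hlt
  have hij : i ≠ j := by rintro rfl; exact lt_irrefl _ hlt
  have hmem : ∀ ε ∈ Icc 0 (p i), p i - ε ∈ Icc (0 : ℝ) 1 ∧ p j + ε ∈ Icc (0 : ℝ) 1 :=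
    fun ε hε =>
      have hq := transfer_mem_stdSimplex hp hij hε.1 hε.2
      ⟨by simpa [transfer, hij] using mem_Icc_of_mem_stdSimplex hq i,
        by simpa [transfer] using mem_Icc_of_mem_stdSimplex hq j⟩
  have hgain : ContinuousOn (fun ε => f j (p j + ε) - f i (p i - ε)) (Icc 0 (p i)) :=
    ((hfc j).comp (continuousOn_const.add continuousOn_id) fun ε hε => (hmem ε hε).2).sub
      ((hfc i).comp (continuousOn_const.sub continuousOn_id) fun ε hε => (hmem ε hε).1)
  obtain ⟨ε, hεpos, hε⟩ : ∃ ε ∈ Ioc 0 (p i), 0 < f j (p j + ε) - f i (p i - ε) := by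
    have := left_nhdsWithin_Ioc_neBot hi
    have hev := (hgain.continuousWithinAt (left_mem_Icc.2 hi.le)).eventually
      (lt_mem_nhds (show (0 : ℝ) < f j (p j + 0) - f i (p i - 0) by simpa using hlt))
    exact ((hev.filter_mono (nhdsWithin_mono _ Set.Ioc_subset_Icc_self)).and
      self_mem_nhdsWithin).exists.imp fun ε h => ⟨h.2, h.1⟩
  have hle : beckmannPotential f (transfer p i j ε) ≤ beckmannPotential f p :=
    hmax (transfer_mem_stdSimplex hp hij hεpos.1.le hεpos.2)
  have hgt := mul_sub_le_beckmannPotential_transfer_sub hf hp hij hεpos.1.le hεpos.2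
  nlinarith [mul_pos hεpos.1 hε]

theorem exists_isBestResponse [Nonempty ι] (hfc : ∀ i, ContinuousOn (f i) (Icc 0 1))
    (hf : ∀ i, AntitoneOn (f i) (Icc 0 1)) :
    ∃ p ∈ stdSimplex ℝ ι, IsBestResponse p fun i => f i (p i) := by
  obtain ⟨p, hp, hmax⟩ := (isCompact_stdSimplex ℝ ι).exists_isMaxOn
    ⟨_, single_mem_stdSimplex ℝ (Classical.arbitrary ι)⟩ (continuousOn_beckmannPotential hfc)
  exact ⟨p, hp, hmax.isBestResponse hfc hf hp⟩

end Potential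

theorem stmt14_general (R C : ℝ) (hC : 0 < C) (w₁ w₂ : ℝ → ℝ)
    (hw₁c : ContinuousOn w₁ (Set.Icc 0 1)) (hw₂c : ContinuousOn w₂ (Set.Icc 0 1))
    (hw₁m : StrictMonoOn w₁ (Set.Icc 0 1)) (hw₂m : StrictMonoOn w₂ (Set.Icc 0 1)) :
    ∃! p : Fin 3 → ℝ,
      ((∀ i, 0 ≤ p i) ∧ ∑ i, p i = 1) ∧
        ∀ i : Fin 3, 0 < p i → ∀ j : Fin 3,
          ![R - C * w₁ (p 0), R - C * w₂ (p 1), 0] j ≤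
            ![R - C * w₁ (p 0), R - C * w₂ (p 1), 0] i := by
  let f : Fin 3 → ℝ → ℝ := ![fun x => R - C * w₁ x, fun x => R - C * w₂ x, fun _ => 0]
  have hu : ∀ p : Fin 3 → ℝ, ![R - C * w₁ (p 0), R - C * w₂ (p 1), 0] = fun i => f i (p i) :=
    fun p => funext fun i => by fin_cases i <;> rfl
  have hstrict : ∀ i ≠ 2, StrictAntiOn (f i) (Icc 0 1) := by
    intro i hi
    fin_cases i
    · exact fun x hx y hy hxy => by simpa [f] using mul_lt_mul_of_pos_left (hw₁m hx hy hxy) hC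
    · exact fun x hx y hy hxy => by simpa [f] using mul_lt_mul_of_pos_left (hw₂m hx hy hxy) hC
    · exact absurd rfl hi
  have hanti : ∀ i, AntitoneOn (f i) (Icc 0 1) := by
    intro i
    by_cases hi : i = 2
    · subst hi; exact antitoneOn_const
    · exact (hstrict i hi).antitoneOn
  have hcont : ∀ i, ContinuousOn (f i) (Icc 0 1) := by
    intro i
    fin_cases i
    · exact continuousOn_const.sub (continuousOn_const.mul hw₁c)
    · exact continuousOn_const.sub (continuousOn_const.mul hw₂c)
    · exact continuousOn_const
  simp only [hu]
  obtain ⟨p, hp, hpf⟩ := exists_isBestResponse hcont hanti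
  exact ⟨p, ⟨hp, hpf⟩, fun q hq => eq_of_isBestResponse hanti 2 hstrict hq.1 hq.2 hp hpf⟩

/-- two unobservable GI/G/1 queues in parallel: let `R, C > 0` and
let `w₁, w₂ : [0,1] → ℝ` be continuous, strictly increasing, with `w₂(0) ≤ w₁(0)`.
For `p = (p₁, p₂, p₃)` in the standard simplex of `ℝ³`, put
`u(p) = (R − C·w₁(p₁), R − C·w₂(p₂), 0)`. Then there is exactly one `p` in the
simplex such that every action played with positive probability achieves the
maximal expected utility. -/
theorem stmt14 (R C : ℝ) (hR : 0 < R) (hC : 0 < C) (w₁ w₂ : ℝ → ℝ)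
    (hw₁c : ContinuousOn w₁ (Set.Icc 0 1)) (hw₂c : ContinuousOn w₂ (Set.Icc 0 1))
    (hw₁m : StrictMonoOn w₁ (Set.Icc 0 1)) (hw₂m : StrictMonoOn w₂ (Set.Icc 0 1))
    (h0 : w₂ 0 ≤ w₁ 0) :
    ∃! p : Fin 3 → ℝ,
      ((∀ i, 0 ≤ p i) ∧ ∑ i, p i = 1) ∧
        ∀ i : Fin 3, 0 < p i → ∀ j : Fin 3,
          ![R - C * w₁ (p 0), R - C * w₂ (p 1), 0] j ≤
            ![R - C * w₁ (p 0), R - C * w₂ (p 1), 0] i :=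
  stmt14_general R C hC w₁ w₂ hw₁c hw₂c hw₁m hw₂m
end
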